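/- arXiv:1003.4614 — 8 statements merged into one kernel-verified Lean document; each statement's English description precedes it below -/
import Mathlib

section
/- There is no nonempty pure 2-dimensional simplicial complex all of whose vertex links are isomorphic to the graph G₅. Precisely: there is no pair (V, F) where V is a nonempty type and F is a set of 3-element finite subsets of V (the faces), such that for every vertex v ∈ V the link of v is graph-isomorphic to G₅. -/
/-- The graph `G₅` (the simplicial inverse pyramid): vertices `vᵢ = i` for `0 ≤ i ≤ 5`,
`mᵢ = 6 + i` for `0 ≤ i ≤ 5`, `t = 12`, `b = 13`; edges `vᵢ ~ v_{(i+1) % 6}`, `vᵢ ~ mᵢ`,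
`mᵢ ~ t` for `i` even and `mᵢ ~ b` for `i` odd. -/
def G5 : SimpleGraph (Fin 14) :=
  SimpleGraph.fromRel (fun a b => (a, b) ∈
    ([(0, 1), (1, 2), (2, 3), (3, 4), (4, 5), (5, 0),
      (0, 6), (1, 7), (2, 8), (3, 9), (4, 10), (5, 11),
      (6, 12), (8, 12), (10, 12), (7, 13), (9, 13), (11, 13)] : List (Fin 14 × Fin 14)))

/-- The link of a vertex `v` in the simplicial complex with face set `F`: the simple graph on
those vertices `w ≠ v` such that `{v, w}` is contained in some member of `F`, with `w` and `w'`
adjacent if and only if `{v, w, w'} ∈ F`. -/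
def linkGraph {V : Type*} (F : Set (Finset V)) (v : V) :
    SimpleGraph {w : V // w ≠ v ∧ ∃ f ∈ F, v ∈ f ∧ w ∈ f} where
  Adj w w' := w.1 ≠ w'.1 ∧ ∃ f ∈ F, (f : Set V) = {v, w.1, w'.1}
  symm := ⟨by
    rintro w w' ⟨hne, f, hf, hset⟩
    exact ⟨hne.symm, f, hf, by rw [hset, Set.pair_comm]⟩⟩
  loopless := ⟨fun w h => h.1 rfl⟩

/-!
For an edge `uv` of the complex, the degree of `v` in the link of `u` and the degree of `u` in
the link of `v` both count the faces containing `u` and `v`. In `G₅` the apex `t` has degree `3`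
and only degree-`2` neighbours, every degree-`3` vertex has a degree-`2` neighbour, and no two
degree-`2` vertices are adjacent. Let `T` play the role of `t` in the link of `v₀`; in the link
of `T`, `v₀` has degree `3`, so it has a neighbour `X` of degree `2`. Then `v₀` and `T` are
adjacent in the link of `X` and both have degree `2` there, which `G₅` forbids.
-/

namespace TwoComplex

variable {V : Type*} {F : Set (Finset V)}

abbrev LinkVert (F : Set (Finset V)) (u : V) : Type _ :=
  {w : V // w ≠ u ∧ ∃ f ∈ F, u ∈ f ∧ w ∈ f}

def LinkVert.swap {u : V} (w : LinkVert F u) : LinkVert F w.1 :=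
  ⟨u, fun h => w.2.1 h.symm, w.2.2.imp fun _ hf => ⟨hf.1, hf.2.2, hf.2.1⟩⟩

def IsTriangle (F : Set (Finset V)) (u v w : V) : Prop :=
  u ≠ v ∧ u ≠ w ∧ v ≠ w ∧ ∃ f ∈ F, (f : Set V) = {u, v, w}

namespace IsTriangle

variable {u v w : V}

theorem swap_left (h : IsTriangle F u v w) : IsTriangle F v u w := by
  obtain ⟨huv, huw, hvw, f, hf, hset⟩ := h
  exact ⟨huv.symm, hvw, huw, f, hf, hset.trans (Set.insert_comm u v {w})⟩

theorem swap_right (h : IsTriangle F u v w) : IsTriangle F u w v := by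
  obtain ⟨huv, huw, hvw, f, hf, hset⟩ := h
  exact ⟨huw, huv, hvw.symm, f, hf, by rw [hset, Set.pair_comm]⟩

theorem mem_link (h : IsTriangle F u v w) : v ≠ u ∧ ∃ f ∈ F, u ∈ f ∧ v ∈ f := by
  obtain ⟨huv, -, -, f, hf, hset⟩ := h
  refine ⟨huv.symm, f, hf, ?_, ?_⟩ <;> simp [← Finset.mem_coe, hset]

end IsTriangle

theorem linkGraph_adj_iff {u : V} {v w : LinkVert F u} :
    (linkGraph F u).Adj v w ↔ IsTriangle F u v w :=
  ⟨fun ⟨hvw, h⟩ => ⟨v.2.1.symm, w.2.1.symm, hvw, h⟩, fun ⟨_, _, hvw, h⟩ => ⟨hvw, h⟩⟩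

noncomputable def edgeDegree (F : Set (Finset V)) (u v : V) : ℕ :=
  Nat.card {w : V // IsTriangle F u v w}

theorem edgeDegree_comm (u v : V) : edgeDegree F u v = edgeDegree F v u :=
  Nat.card_congr
    { toFun := fun w => ⟨w.1, w.2.swap_left⟩
      invFun := fun w => ⟨w.1, w.2.swap_left⟩
      left_inv := fun _ => rfl
      right_inv := fun _ => rfl }

theorem card_neighborSet_linkGraph {u : V} (v : LinkVert F u) :
    Nat.card ((linkGraph F u).neighborSet v) = edgeDegree F u v :=
  Nat.card_congr
    { toFun := fun w => ⟨w.1.1, linkGraph_adj_iff.mp w.2⟩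
      invFun := fun w => ⟨⟨w.1, w.2.swap_right.mem_link⟩, linkGraph_adj_iff.mpr w.2⟩
      left_inv := fun _ => rfl
      right_inv := fun _ => rfl }

variable {W : Type*} {H : SimpleGraph W}

theorem IsTriangle.adj_linkGraphIso {u v w : V} (h : IsTriangle F u v w)
    (e : linkGraph F u ≃g H) : H.Adj (e ⟨v, h.mem_link⟩) (e ⟨w, h.swap_right.mem_link⟩) :=
  e.map_rel_iff.mpr (linkGraph_adj_iff.mpr h)

variable [H.LocallyFinite]

theorem degree_linkGraphIso {u : V} (e : linkGraph F u ≃g H) (v : LinkVert F u) :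
    H.degree (e v) = edgeDegree F u v := by
  rw [← card_neighborSet_linkGraph, ← SimpleGraph.card_neighborSet_eq_degree,
    ← Nat.card_eq_fintype_card, Nat.card_congr (e.mapNeighborSet v)]

theorem not_forall_nonempty_linkGraph_iso [Nonempty V] (a : W) (k : ℕ)
    (ha : ∀ b, H.Adj a b → H.degree b = k)
    (hdeg : ∀ c, H.degree c = H.degree a → ∃ b, H.Adj c b ∧ H.degree b = k)
    (hk : ∀ b c, H.Adj b c → H.degree b = k → H.degree c ≠ k) :
    ¬ ∀ v : V, Nonempty (linkGraph F v ≃g H) := by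
  intro hlink
  obtain ⟨v₀⟩ := ‹Nonempty V›
  obtain ⟨φ⟩ := hlink v₀
  set T : LinkVert F v₀ := φ.symm a
  have hT : edgeDegree F T v₀ = H.degree a := by
    rw [edgeDegree_comm, ← degree_linkGraphIso φ, φ.apply_symm_apply]
  obtain ⟨ψ⟩ := hlink T
  obtain ⟨y, hy, hyk⟩ := hdeg (ψ (LinkVert.swap T)) (by rw [degree_linkGraphIso]; exact hT)
  set X : LinkVert F T := ψ.symm y
  have hψX : ψ X = y := ψ.apply_symm_apply y
  rw [← hψX] at hy
  have hTX : IsTriangle F T v₀ X := linkGraph_adj_iff.mp (ψ.map_rel_iff.mp hy)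
  have hv₀X : edgeDegree F v₀ X = k := by
    have hadj := hTX.swap_left.adj_linkGraphIso φ
    rw [← degree_linkGraphIso φ ⟨X, hTX.swap_left.swap_right.mem_link⟩]
    exact ha _ (by simpa [T] using hadj)
  have hXT : edgeDegree F X T = k := by
    rw [edgeDegree_comm, ← hyk, ← hψX, degree_linkGraphIso]
  obtain ⟨χ⟩ := hlink X
  exact hk _ _ (hTX.swap_right.swap_left.swap_right.adj_linkGraphIso χ)
    (by rw [degree_linkGraphIso, edgeDegree_comm, hv₀X]) (by rw [degree_linkGraphIso, hXT])

end TwoComplex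

instance : DecidableRel G5.Adj := fun a b => decidable_of_iff' _ (SimpleGraph.fromRel_adj _ a b)

/-- There is no nonempty pure 2-dimensional simplicial complex all of whose vertex links are
isomorphic to the inverse pyramid `G₅`. -/
theorem no_complex_with_all_links_G5 :
    ¬ ∃ (V : Type) (_ : Nonempty V) (F : Set (Finset V)),
      (∀ f ∈ F, f.card = 3) ∧ ∀ v : V, Nonempty (linkGraph F v ≃g G5) := by
  rintro ⟨V, _, F, -, hlink⟩
  exact TwoComplex.not_forall_nonempty_linkGraph_iso (F := F) 12 2 (by decide) (by decide)
    (by decide) hlink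
end

section
/- The Heawood graph is edge-transitive: for any two edges e and f of the Heawood graph H, there exists a graph automorphism θ of H carrying e to f (i.e., Sym2.map θ e = f). Consequently, up to isomorphism there is exactly one graph obtained from H by deleting a single edge. -/
/-!
The Heawood graph is the incidence graph of the development of the perfect difference set
`D = {0, 1, 3}` in `ZMod 7`. Translating points and lines by the same `p` is an automorphism and
moves every edge to one at point `0`. The affine map `x ↦ 2x` on points, `y ↦ 2y + 1` on lines is
an automorphism because `2D + 1 = D`; it fixes point `0` and cycles the three lines through it, so
all edges lie in one orbit. An automorphism carrying `e` to `f` restricts to an isomorphism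
between the graphs with `e`, resp. `f`, deleted.
-/

/-- The Heawood graph: the incidence graph of the Fano plane, on vertex set
`ZMod 7 ⊕ ZMod 7`, where point `Sum.inl p` is adjacent to line `Sum.inr ℓ` if and only if
`ℓ - p ∈ {0, 1, 3}`, and no two points and no two lines are adjacent. -/
def Heawood : SimpleGraph (ZMod 7 ⊕ ZMod 7) :=
  SimpleGraph.fromRel (fun a b => ∃ p ℓ : ZMod 7,
    a = Sum.inl p ∧ b = Sum.inr ℓ ∧ ℓ - p ∈ ({0, 1, 3} : Set (ZMod 7)))

open Sum

namespace SimpleGraph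

variable {V W : Type*}

def EdgeTransitive (G : SimpleGraph V) : Prop :=
  ∀ e ∈ G.edgeSet, ∀ f ∈ G.edgeSet, ∃ θ : G ≃g G, Sym2.map θ e = f

theorem EdgeTransitive.of_forall_map_eq {G : SimpleGraph V} (e₀ : Sym2 V)
    (h : ∀ e ∈ G.edgeSet, ∃ θ : G ≃g G, Sym2.map θ e₀ = e) : G.EdgeTransitive := by
  intro e he f hf
  obtain ⟨θe, rfl⟩ := h e he
  obtain ⟨θf, rfl⟩ := h f hf
  refine ⟨θe.symm.trans θf, ?_⟩
  rw [Sym2.map_map]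
  congr 1
  ext v
  simp

def Iso.deleteEdgesOfMapEq {G : SimpleGraph V} {H : SimpleGraph W} (θ : G ≃g H)
    {e : Sym2 V} {f : Sym2 W} (h : Sym2.map θ e = f) :
    G.deleteEdges {e} ≃g H.deleteEdges {f} where
  toEquiv := θ.toEquiv
  map_rel_iff' {a b} := by
    subst h
    simp only [deleteEdges_adj]
    change H.Adj (θ a) (θ b) ∧ s(θ a, θ b) ∉ ({Sym2.map θ e} : Set _) ↔
      G.Adj a b ∧ s(a, b) ∉ ({e} : Set _)
    rw [← Sym2.map_mk, Set.mem_singleton_iff, (Sym2.map.injective θ.injective).eq_iff,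
      θ.map_rel_iff, Set.mem_singleton_iff]

variable {R : Type*}

/-- The point–line incidence graph of the development `{D + g | g : R}` of `D`. -/
def devGraph [AddCommGroup R] (D : Set R) : SimpleGraph (R ⊕ R) :=
  fromRel fun a b => ∃ p ℓ : R, a = inl p ∧ b = inr ℓ ∧ ℓ - p ∈ D

namespace devGraph

section AddCommGroup

variable [AddCommGroup R] {D : Set R}

@[simp]
theorem adj_inl_inr {p ℓ : R} : (devGraph D).Adj (inl p) (inr ℓ) ↔ ℓ - p ∈ D := by
  simp [devGraph]

@[simp]
theorem adj_inr_inl {p ℓ : R} : (devGraph D).Adj (inr ℓ) (inl p) ↔ ℓ - p ∈ D := by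
  simp [devGraph]

@[simp]
theorem not_adj_inl_inl {p q : R} : ¬(devGraph D).Adj (inl p) (inl q) := by
  simp [devGraph]

@[simp]
theorem not_adj_inr_inr {ℓ m : R} : ¬(devGraph D).Adj (inr ℓ) (inr m) := by
  simp [devGraph]

def isoOfPerm (f g : Equiv.Perm R) (h : ∀ p ℓ, g ℓ - f p ∈ D ↔ ℓ - p ∈ D) :
    devGraph D ≃g devGraph D where
  toEquiv := Equiv.sumCongr f g
  map_rel_iff' {a b} := by
    rcases a with p | ℓ <;> rcases b with q | m <;> simp [h]

def translate (D : Set R) (p : R) : devGraph D ≃g devGraph D :=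
  isoOfPerm (Equiv.addRight p) (Equiv.addRight p) fun _ _ => by simp

theorem exists_map_translate_eq {e : Sym2 (R ⊕ R)} (he : e ∈ (devGraph D).edgeSet) :
    ∃ p, ∃ d ∈ D, Sym2.map (translate D p) s(inl 0, inr d) = e := by
  induction e using Sym2.ind with
  | _ a b =>
    rcases a with p | ℓ <;> rcases b with q | m <;> simp at he
    · exact ⟨p, m - p, he, by simp [translate, isoOfPerm]⟩
    · exact ⟨q, ℓ - q, he, by simp [translate, isoOfPerm, Sym2.eq_swap]⟩

end AddCommGroup

def multiply [Ring R] (D : Set R) (u : Rˣ) (t : R) (h : ∀ d, u * d + t ∈ D ↔ d ∈ D) :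
    devGraph D ≃g devGraph D :=
  isoOfPerm (Units.mulLeft u) ((Units.mulLeft u).trans (Equiv.addRight t)) fun p ℓ => by
    simp [← h (ℓ - p), mul_sub, sub_add_eq_add_sub]

end devGraph

end SimpleGraph

open SimpleGraph

/-- `Heawood` is `devGraph {0, 1, 3}` by definition. Since `2 • {0, 1, 3} + 1 = {0, 1, 3}`, this
fixes point `0` and cycles the lines `0 → 1 → 3 → 0` through it. -/
def heawoodRotation : Heawood ≃g Heawood :=
  devGraph.multiply _ (ZMod.unitOfCoprime 2 (by norm_num)) 1 (by decide)

theorem exists_map_eq_line_through_zero {d : ZMod 7} (hd : d ∈ ({0, 1, 3} : Set (ZMod 7))) :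
    ∃ θ : Heawood ≃g Heawood,
      Sym2.map θ s(inl 0, inr 0) = s(inl 0, inr d) := by
  rcases hd with rfl | rfl | rfl
  · exact ⟨RelIso.refl _, by simp⟩
  · exact ⟨heawoodRotation, by decide⟩
  · exact ⟨heawoodRotation.trans heawoodRotation, by decide⟩

theorem heawood_edgeTransitive : Heawood.EdgeTransitive := by
  refine EdgeTransitive.of_forall_map_eq s(inl 0, inr 0) fun e he => ?_
  obtain ⟨p, d, hd, rfl⟩ := devGraph.exists_map_translate_eq he
  obtain ⟨θ, hθ⟩ := exists_map_eq_line_through_zero hd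
  exact ⟨θ.trans (devGraph.translate _ p), by rw [← hθ, Sym2.map_map]; rfl⟩

/-- The Heawood graph is edge-transitive: any edge can be carried to any other edge by a graph
automorphism. Consequently, up to isomorphism there is exactly one graph obtained from the
Heawood graph by deleting a single edge. -/
theorem heawood_edge_transitive :
    (∀ e ∈ Heawood.edgeSet, ∀ f ∈ Heawood.edgeSet,
      ∃ θ : Heawood ≃g Heawood, Sym2.map ⇑θ e = f) ∧
    (∀ e ∈ Heawood.edgeSet, ∀ f ∈ Heawood.edgeSet,
      Nonempty (Heawood.deleteEdges {e} ≃g Heawood.deleteEdges {f})) := by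
  refine ⟨heawood_edgeTransitive, fun e he f hf => ?_⟩
  obtain ⟨θ, hθ⟩ := heawood_edgeTransitive e he f hf
  exact ⟨θ.deleteEdgesOfMapEq hθ⟩
end

section
/- Up to graph isomorphism, there exist exactly two graphs of the form obtained from the Heawood graph H by deleting two disjoint edges: there are two non-isomorphic simple graphs A and B on 14 vertices such that every graph H minus {e, f}, where e and f are distinct edges of H with no common endpoint, is isomorphic to A or to B, and both A and B arise in this way. -/
/-- Two edges (elements of `Sym2 V`) are disjoint if they share no endpoint. -/
def EdgeDisj {V : Type*} (e f : Sym2 V) : Prop := ∀ v : V, v ∈ e → v ∉ f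

open Sum

namespace SimpleGraph

variable {V W : Type*} {G : SimpleGraph V} {G' : SimpleGraph W}

def Iso.deleteEdges (φ : G ≃g G') (s : Set (Sym2 V)) :
    G.deleteEdges s ≃g G'.deleteEdges (Sym2.map φ '' s) where
  toEquiv := φ.toEquiv
  map_rel_iff' {a b} := by
    rw [deleteEdges_adj, deleteEdges_adj]
    change G'.Adj (φ a) (φ b) ∧ s(φ a, φ b) ∉ _ ↔ _
    rw [φ.map_adj_iff, ← Sym2.map_mk, (Sym2.map.injective φ.injective).mem_set_image]

def diffIncidence {R : Type*} [AddGroup R] (D : Set R) : SimpleGraph (R ⊕ R) :=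
  fromRel fun a b => ∃ p ℓ : R, a = inl p ∧ b = inr ℓ ∧ ℓ - p ∈ D

namespace diffIncidence

variable {R : Type*}

section AddGroup

variable [AddGroup R] {D : Set R}

@[simp]
theorem adj_inl_inr {p ℓ : R} : (diffIncidence D).Adj (inl p) (inr ℓ) ↔ ℓ - p ∈ D := by
  simp [diffIncidence]

@[simp]
theorem adj_inr_inl {p ℓ : R} : (diffIncidence D).Adj (inr ℓ) (inl p) ↔ ℓ - p ∈ D := by
  simp [diffIncidence]

@[simp]
theorem not_adj_inl_inl {p q : R} : ¬ (diffIncidence D).Adj (inl p) (inl q) := by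
  simp [diffIncidence]

@[simp]
theorem not_adj_inr_inr {ℓ m : R} : ¬ (diffIncidence D).Adj (inr ℓ) (inr m) := by
  simp [diffIncidence]

instance [DecidablePred (· ∈ D)] : DecidableRel (diffIncidence D).Adj
  | inl _, inr _ => decidable_of_iff _ adj_inl_inr.symm
  | inr _, inl _ => decidable_of_iff _ adj_inr_inl.symm
  | inl _, inl _ => isFalse not_adj_inl_inl
  | inr _, inr _ => isFalse not_adj_inr_inr

theorem exists_eq_of_mem_edgeSet {e : Sym2 (R ⊕ R)} (he : e ∈ (diffIncidence D).edgeSet) :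
    ∃ p ℓ, ℓ - p ∈ D ∧ e = s(inl p, inr ℓ) := by
  induction e using Sym2.ind with
  | _ a b =>
    rcases a with p | ℓ <;> rcases b with q | m <;>
      simp only [mem_edgeSet, adj_inl_inr, adj_inr_inl, not_adj_inl_inl, not_adj_inr_inr] at he
    · exact ⟨p, m, he, rfl⟩
    · exact ⟨q, ℓ, he, Sym2.eq_swap⟩

end AddGroup

section Ring

variable [Ring R] {D : Set R}

def affineIso (u : Rˣ) (b c : R) (hD : ∀ x, u * x + c ∈ D ↔ x ∈ D) :
    diffIncidence D ≃g diffIncidence D where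
  toEquiv := Equiv.sumCongr ((Units.mulLeft u).trans (Equiv.addRight b))
    ((Units.mulLeft u).trans (Equiv.addRight (b + c)))
  map_rel_iff' {x y} := by
    have hsub (p ℓ : R) : u * ℓ + (b + c) - (u * p + b) = u * (ℓ - p) + c := by noncomm_ring
    rcases x with p | ℓ <;> rcases y with q | m <;> simp [hsub, hD]

theorem exists_iso_map_eq_of_mem_edgeSet (hD : ∀ d ∈ D, ∃ u : Rˣ, ∀ x, u * x + d ∈ D ↔ x ∈ D)
    {e : Sym2 (R ⊕ R)} (he : e ∈ (diffIncidence D).edgeSet) :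
    ∃ φ : diffIncidence D ≃g diffIncidence D, Sym2.map φ s(inl 0, inr 0) = e := by
  obtain ⟨p, ℓ, hd, rfl⟩ := exists_eq_of_mem_edgeSet he
  obtain ⟨u, hu⟩ := hD _ hd
  refine ⟨affineIso u p (ℓ - p) hu, ?_⟩
  simp [affineIso]

end Ring

end diffIncidence

end SimpleGraph

theorem EdgeDisj.map {V W : Type*} {e f : Sym2 V} (h : EdgeDisj e f) {φ : V → W}
    (hφ : Function.Injective φ) : EdgeDisj (Sym2.map φ e) (Sym2.map φ f) := by
  intro x hx hx'
  obtain ⟨v, hv, rfl⟩ := Sym2.mem_map.mp hx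
  obtain ⟨w, hw, hwv⟩ := Sym2.mem_map.mp hx'
  exact h v hv (hφ hwv ▸ hw)

open SimpleGraph

namespace Heawood

instance : DecidableRel Heawood.Adj :=
  inferInstanceAs (DecidableRel (diffIncidence ({0, 1, 3} : Set (ZMod 7))).Adj)

/- `nearEdge` is joined to `baseEdge` by the edge `s(inl 4, inr 0)`; no edge joins `farEdge`
to `baseEdge`. -/
def baseEdge : Sym2 (ZMod 7 ⊕ ZMod 7) := s(inl 0, inr 0)

def nearEdge : Sym2 (ZMod 7 ⊕ ZMod 7) := s(inl 4, inr 4)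

def farEdge : Sym2 (ZMod 7 ⊕ ZMod 7) := s(inl 1, inr 2)

theorem exists_aut_map_eq_of_mem_edgeSet {e : Sym2 (ZMod 7 ⊕ ZMod 7)} (he : e ∈ Heawood.edgeSet) :
    ∃ φ : Heawood ≃g Heawood, Sym2.map φ baseEdge = e := by
  refine diffIncidence.exists_iso_map_eq_of_mem_edgeSet ?_ he
  rintro d (rfl | rfl | rfl)
  exacts [⟨1, by decide⟩, ⟨⟨2, 4, rfl, rfl⟩, by decide⟩, ⟨⟨4, 2, rfl, rfl⟩, by decide⟩]

/-- An automorphism of order 8 fixing `baseEdge` and exchanging points and lines, found by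
computer search. -/
noncomputable def rho : Heawood ≃g Heawood where
  toEquiv := Equiv.ofBijective
    (Sum.elim (inr ∘ (![0, 2, 5, 4, 1, 6, 3] : ZMod 7 → ZMod 7))
      (inl ∘ (![0, 6, 2, 4, 1, 5, 3] : ZMod 7 → ZMod 7)))
    (Finite.injective_iff_bijective.mp (by decide))
  map_rel_iff' {a b} := by revert a b; decide

theorem pow_rho_map_baseEdge (k : ℕ) : Sym2.map ⇑(rho ^ k) baseEdge = baseEdge := by
  induction k with
  | zero => rw [pow_zero, RelIso.coe_one, Sym2.map_id, id]
  | succ k ih =>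
    rw [pow_succ, RelIso.coe_mul, ← Sym2.map_map, (by decide : Sym2.map rho baseEdge = baseEdge),
      ih]

theorem exists_pow_rho_map_eq (p ℓ : ZMod 7) (hpℓ : ℓ - p ∈ ({0, 1, 3} : Set (ZMod 7)))
    (hp : p ≠ 0) (hℓ : ℓ ≠ 0) : ∃ k : Fin 8,
      Sym2.map ⇑(rho ^ (k : ℕ)) nearEdge = s(inl p, inr ℓ) ∨
      Sym2.map ⇑(rho ^ (k : ℕ)) farEdge = s(inl p, inr ℓ) := by
  revert p ℓ; decide

theorem exists_aut_map_eq_of_edgeDisj {e f : Sym2 (ZMod 7 ⊕ ZMod 7)} (he : e ∈ Heawood.edgeSet)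
    (hf : f ∈ Heawood.edgeSet) (hef : EdgeDisj e f) :
    ∃ σ : Heawood ≃g Heawood, Sym2.map σ baseEdge = e ∧
      (Sym2.map σ nearEdge = f ∨ Sym2.map σ farEdge = f) := by
  obtain ⟨φ, rfl⟩ := exists_aut_map_eq_of_mem_edgeSet he
  obtain ⟨p, ℓ, hpℓ, hf'⟩ :=
    diffIncidence.exists_eq_of_mem_edgeSet (φ.symm.map_mem_edgeSet_iff.mpr hf)
  have hdisj : EdgeDisj baseEdge s(inl p, inr ℓ) := by
    simpa [← hf', Sym2.map_map] using hef.map φ.symm.injective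
  have hp : p ≠ 0 := by
    rintro rfl; exact hdisj (inl 0) (Sym2.mem_mk_left _ _) (Sym2.mem_mk_left _ _)
  have hℓ : ℓ ≠ 0 := by
    rintro rfl; exact hdisj (inr 0) (Sym2.mem_mk_right _ _) (Sym2.mem_mk_right _ _)
  obtain ⟨k, hk⟩ := exists_pow_rho_map_eq p ℓ hpℓ hp hℓ
  have hφ : Sym2.map φ s(inl p, inr ℓ) = f := by simp [← hf', Sym2.map_map]
  refine ⟨φ * rho ^ (k : ℕ), ?_, ?_⟩
  · rw [RelIso.coe_mul, ← Sym2.map_map, pow_rho_map_baseEdge]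
  · rw [RelIso.coe_mul, ← Sym2.map_map, ← Sym2.map_map, ← hφ]
    exact hk.imp (congrArg _) (congrArg _)

theorem not_nonempty_iso_deleteEdges_near_far :
    ¬ Nonempty (Heawood.deleteEdges {baseEdge, nearEdge} ≃g
      Heawood.deleteEdges {baseEdge, farEdge}) := by
  rintro ⟨ψ⟩
  have hnear : (Heawood.deleteEdges {baseEdge, nearEdge}).Adj (inl 4) (inr 0) ∧
      (Heawood.deleteEdges {baseEdge, nearEdge}).degree (inl 4) = 2 ∧
      (Heawood.deleteEdges {baseEdge, nearEdge}).degree (inr 0) = 2 := by decide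
  have hfar : ∀ u v, (Heawood.deleteEdges {baseEdge, farEdge}).Adj u v →
      (Heawood.deleteEdges {baseEdge, farEdge}).degree u = 2 →
      (Heawood.deleteEdges {baseEdge, farEdge}).degree v ≠ 2 := by decide
  obtain ⟨hadj, hu, hv⟩ := hnear
  exact hfar _ _ (ψ.map_adj_iff.mpr hadj) (by rw [ψ.degree_eq, hu]) (by rw [ψ.degree_eq, hv])

end Heawood

/-- Up to isomorphism, there are exactly two graphs obtained from the Heawood graph by deleting
two disjoint edges. -/
theorem heawood_delete_two_disjoint_edges :
    ∃ A B : SimpleGraph (Fin 14),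
      ¬ Nonempty (A ≃g B) ∧
      (∀ e ∈ Heawood.edgeSet, ∀ f ∈ Heawood.edgeSet, EdgeDisj e f →
        Nonempty (Heawood.deleteEdges {e, f} ≃g A) ∨
        Nonempty (Heawood.deleteEdges {e, f} ≃g B)) ∧
      (∃ e ∈ Heawood.edgeSet, ∃ f ∈ Heawood.edgeSet, EdgeDisj e f ∧
        Nonempty (Heawood.deleteEdges {e, f} ≃g A)) ∧
      (∃ e ∈ Heawood.edgeSet, ∃ f ∈ Heawood.edgeSet, EdgeDisj e f ∧
        Nonempty (Heawood.deleteEdges {e, f} ≃g B)) := by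
  let toFin : ZMod 7 ⊕ ZMod 7 ≃ Fin 14 := Fintype.equivFinOfCardEq rfl
  have toFinIso (g : Sym2 (ZMod 7 ⊕ ZMod 7)) :=
    Iso.map toFin (Heawood.deleteEdges {Heawood.baseEdge, g})
  refine ⟨_, _, fun ⟨ψ⟩ ↦ Heawood.not_nonempty_iso_deleteEdges_near_far
      ⟨((toFinIso _).trans ψ).trans (toFinIso _).symm⟩, ?_,
    ⟨_, by decide, _, by decide, by unfold EdgeDisj; decide, ⟨toFinIso Heawood.nearEdge⟩⟩,
    ⟨_, by decide, _, by decide, by unfold EdgeDisj; decide, ⟨toFinIso Heawood.farEdge⟩⟩⟩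
  intro e he f hf hef
  obtain ⟨σ, rfl, hσ⟩ := Heawood.exists_aut_map_eq_of_edgeDisj he hf hef
  have transport (g : Sym2 (ZMod 7 ⊕ ZMod 7)) :
      Nonempty (Heawood.deleteEdges {Sym2.map σ Heawood.baseEdge, Sym2.map σ g} ≃g
        (Heawood.deleteEdges {Heawood.baseEdge, g}).map toFin) := by
    rw [← Set.image_pair]
    exact ⟨(σ.deleteEdges _).symm.trans (toFinIso g)⟩
  rcases hσ with rfl | rfl
  exacts [Or.inl (transport _), Or.inr (transport _)]
end

section
/- The automorphism group of the graph G₅ has order exactly 12. -/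
noncomputable instance : Fintype (G5 ≃g G5) :=
  Fintype.ofInjective (fun θ : G5 ≃g G5 => θ.toEquiv) RelIso.toEquiv_injective

namespace SimpleGraph.Iso

variable {V : Type*} {G : SimpleGraph V}

def ofInvolutive (f : V → V) (hf : Function.Involutive f)
    (hadj : ∀ a b, G.Adj (f a) (f b) ↔ G.Adj a b) : G ≃g G :=
  ⟨hf.toPerm f, hadj _ _⟩

theorem apply_eq_self_of_adj [G.LocallyFinite] (θ : G ≃g G) {x y : V} {s : Finset V}
    (hx : θ x = x) (hxy : G.Adj x y) (hs : ∀ z ∈ s, θ z = z)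
    (hy : ∀ z, G.Adj x z → G.degree z = G.degree y → z = y ∨ z ∈ s) : θ y = y := by
  have hadj : G.Adj x (θ y) := hx ▸ θ.map_adj_iff.mpr hxy
  rcases hy (θ y) hadj (θ.degree_eq y) with h | h
  · exact h
  · exact θ.injective (hs _ h)

end SimpleGraph.Iso

instance inst_s7 : DecidableRel G5.Adj := fun a b =>
  decidable_of_iff _ (SimpleGraph.fromRel_adj _ a b).symm

namespace G5

def hexagonArcs : Finset (Fin 14 × Fin 14) :=
  {p | G5.Adj p.1 p.2 ∧ G5.degree p.1 = 3 ∧ G5.degree p.2 = 3}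

theorem card_hexagonArcs : hexagonArcs.card = 12 := by
  decide

theorem map_mem_hexagonArcs (θ : G5 ≃g G5) {p : Fin 14 × Fin 14} (hp : p ∈ hexagonArcs) :
    (θ p.1, θ p.2) ∈ hexagonArcs := by
  simpa only [hexagonArcs, Finset.mem_filter, Finset.mem_univ, true_and, θ.map_adj_iff,
    θ.degree_eq] using hp

def arcOf (θ : G5 ≃g G5) : hexagonArcs :=
  ⟨(θ 0, θ 1), map_mem_hexagonArcs θ (p := (0, 1)) (by decide)⟩

theorem eq_one_of_apply_zero_of_apply_one (θ : G5 ≃g G5) (h0 : θ 0 = 0) (h1 : θ 1 = 1) :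
    θ = 1 := by
  have h2 : θ 2 = 2 := θ.apply_eq_self_of_adj (s := {0}) h1 (by decide) (by simpa) (by decide)
  have h3 : θ 3 = 3 := θ.apply_eq_self_of_adj (s := {1}) h2 (by decide) (by simpa) (by decide)
  have h4 : θ 4 = 4 := θ.apply_eq_self_of_adj (s := {2}) h3 (by decide) (by simpa) (by decide)
  have h5 : θ 5 = 5 := θ.apply_eq_self_of_adj (s := {3}) h4 (by decide) (by simpa) (by decide)
  have h6 : θ 6 = 6 := θ.apply_eq_self_of_adj (s := ∅) h0 (by decide) (by simp) (by decide)
  have h7 : θ 7 = 7 := θ.apply_eq_self_of_adj (s := ∅) h1 (by decide) (by simp) (by decide)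
  have h8 : θ 8 = 8 := θ.apply_eq_self_of_adj (s := ∅) h2 (by decide) (by simp) (by decide)
  have h9 : θ 9 = 9 := θ.apply_eq_self_of_adj (s := ∅) h3 (by decide) (by simp) (by decide)
  have h10 : θ 10 = 10 := θ.apply_eq_self_of_adj (s := ∅) h4 (by decide) (by simp) (by decide)
  have h11 : θ 11 = 11 := θ.apply_eq_self_of_adj (s := ∅) h5 (by decide) (by simp) (by decide)
  have h12 : θ 12 = 12 := θ.apply_eq_self_of_adj (s := {0}) h6 (by decide) (by simpa) (by decide)
  have h13 : θ 13 = 13 := θ.apply_eq_self_of_adj (s := {1}) h7 (by decide) (by simpa) (by decide)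
  refine RelIso.ext fun x => ?_
  fin_cases x <;> assumption

theorem arcOf_injective : Function.Injective arcOf := by
  intro θ τ h
  have h0 : θ 0 = τ 0 := congrArg (fun p : hexagonArcs => p.1.1) h
  have h1 : θ 1 = τ 1 := congrArg (fun p : hexagonArcs => p.1.2) h
  have hfix : τ⁻¹ * θ = 1 :=
    eq_one_of_apply_zero_of_apply_one _ (by simp [RelIso.mul_apply, h0])
      (by simp [RelIso.mul_apply, h1])
  exact (inv_mul_eq_one.mp hfix).symm

def reflectThroughVertex : G5 ≃g G5 :=
  .ofInvolutive ![0, 5, 4, 3, 2, 1, 6, 11, 10, 9, 8, 7, 12, 13] (by intro x; revert x; decide)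
    (by decide)

def reflectThroughEdge : G5 ≃g G5 :=
  .ofInvolutive ![1, 0, 5, 4, 3, 2, 7, 6, 11, 10, 9, 8, 13, 12] (by intro x; revert x; decide)
    (by decide)

def rotation : G5 ≃g G5 :=
  reflectThroughEdge * reflectThroughVertex

theorem exists_dihedral_arcOf_eq :
    ∀ p ∈ hexagonArcs, ∃ k : Fin 6,
      (arcOf (rotation ^ (k : ℕ)) : Fin 14 × Fin 14) = p ∨
      (arcOf (rotation ^ (k : ℕ) * reflectThroughVertex) : Fin 14 × Fin 14) = p := by
  set_option maxRecDepth 20000 in decide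

theorem arcOf_surjective : Function.Surjective arcOf := by
  rintro ⟨p, hp⟩
  obtain ⟨k, h | h⟩ := exists_dihedral_arcOf_eq p hp <;> exact ⟨_, Subtype.ext h⟩

end G5

/-- The automorphism group of the inverse pyramid `G₅` has order exactly 12. -/
theorem card_aut_G5 : Fintype.card (G5 ≃g G5) = 12 := by
  rw [Fintype.card_of_bijective ⟨G5.arcOf_injective, G5.arcOf_surjective⟩, Fintype.card_coe,
    G5.card_hexagonArcs]
end

section
/- In a simple graph of girth at least 6, for any vertices u and w, the number of paths with exactly 3 edges from u to w is at most the degree of u. (Equivalently, in the paper's notation, every root α satisfies N(α) ≤ q_α.) -/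
/-!
A path `u – a – b – w` is determined by its second vertex `a`: another path `u – a – b' – w` with
`b' ≠ b` would close the 4-cycle `a – b – w – b' – a`, which girth at least 6 forbids. Hence
`p ↦ p.snd` injects the paths of length 3 from `u` to `w` into the neighbours of `u`.
-/

namespace SimpleGraph

variable {V : Type*} {G : SimpleGraph V}

lemma Walk.exists_eq_cons_cons_cons_nil {u w : V} (p : G.Walk u w) (hp : p.length = 3) :
    ∃ (a b : V) (hua : G.Adj u a) (hab : G.Adj a b) (hbw : G.Adj b w),
      p = .cons hua (.cons hab (.cons hbw .nil)) := by
  match p, hp with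
  | .cons hua (.cons hab (.cons hbw .nil)), _ => exact ⟨_, _, hua, hab, hbw, rfl⟩

lemma commonNeighbors_subsingleton_of_four_lt_egirth (hG : 4 < G.egirth) {a w : V}
    (haw : a ≠ w) : (G.commonNeighbors a w).Subsingleton := by
  simp only [Set.Subsingleton, mem_commonNeighbors]
  rintro b ⟨hab, hwb⟩ b' ⟨hab', hwb'⟩
  by_contra hbb'
  have hc : (Walk.cons hab (.cons hwb.symm (.cons hwb' (.cons hab'.symm .nil)))).IsCycle := by
    rw [Walk.cons_isCycle_iff]
    simp [hab.ne, hab.ne.symm, hwb.ne.symm, hwb'.ne, hab'.ne, hab'.ne.symm, haw, haw.symm, hbb']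
  exact (egirth_le_length hc).not_gt hG

lemma Walk.eq_of_snd_eq (hG : 4 < G.egirth) {u w : V} {p q : G.Walk u w}
    (hp : p.IsPath) (hp3 : p.length = 3) (hq3 : q.length = 3)
    (h : p.snd = q.snd) : p = q := by
  obtain ⟨a, b, hua, hab, hbw, rfl⟩ := p.exists_eq_cons_cons_cons_nil hp3
  obtain ⟨a', b', hua', hab', hbw', rfl⟩ := q.exists_eq_cons_cons_cons_nil hq3
  obtain rfl : a = a' := h
  have haw : a ≠ w := by simp_all [Walk.cons_isPath_iff]
  obtain rfl : b = b' :=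
    commonNeighbors_subsingleton_of_four_lt_egirth hG haw ⟨hab, hbw.symm⟩ ⟨hab', hbw'.symm⟩
  rfl

end SimpleGraph

/-- In a finite simple graph of girth at least 6, for any vertices `u` and `w`, the number of
paths with exactly 3 edges from `u` to `w` is at most the degree (number of neighbors) of `u`.
(In the paper's notation: every root `α` satisfies `N(α) ≤ q_α`.) -/
theorem card_three_paths_le_degree {V : Type*} [Fintype V] (G : SimpleGraph V)
    (hg : 6 ≤ G.girth) (u w : V) :
    Nat.card {p : G.Walk u w // p.IsPath ∧ p.length = 3} ≤
      Nat.card (G.neighborSet u) := by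
  have hG : 4 < G.egirth :=
    calc (4 : ℕ∞) < 6 := by norm_num
      _ ≤ G.girth := by exact_mod_cast hg
      _ ≤ G.egirth := G.egirth.natCast_toNat_le_self
  refine Nat.card_le_card_of_injective
    (fun p ↦ ⟨p.1.snd, p.1.adj_snd (SimpleGraph.Walk.not_nil_iff_lt_length.mpr (by omega))⟩) ?_
  rintro ⟨p, hp, hp3⟩ ⟨q, _, hq3⟩ h
  exact Subtype.ext (SimpleGraph.Walk.eq_of_snd_eq hG hp hp3 hq3 (congrArg Subtype.val h))
end

section
/- The abelianization of the group Γ₆¹ = ⟨u, v, w | u² w = v w v, w = v⁻¹ u w⁻¹ u v⟩ is isomorphic to ℤ × ℤ/2ℤ × ℤ/2ℤ. -/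
/-- The relator `u² w v⁻¹ w⁻¹ v⁻¹` (i.e. the relation `u² w = v w v`) in the free group on
generators `u = of 0`, `v = of 1`, `w = of 2`. -/
def rel61a : FreeGroup (Fin 3) :=
  (FreeGroup.of 0) ^ 2 * (FreeGroup.of 2) * (FreeGroup.of 1)⁻¹ * (FreeGroup.of 2)⁻¹ *
    (FreeGroup.of 1)⁻¹

/-- The relator `v⁻¹ u w⁻¹ u v w⁻¹` (i.e. the relation `w = v⁻¹ u w⁻¹ u v`) in the free group
on generators `u = of 0`, `v = of 1`, `w = of 2`. -/
def rel61b : FreeGroup (Fin 3) :=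
  (FreeGroup.of 1)⁻¹ * (FreeGroup.of 0) * (FreeGroup.of 2)⁻¹ * (FreeGroup.of 0) *
    (FreeGroup.of 1) * (FreeGroup.of 2)⁻¹

/-- The group `Γ₆¹ = ⟨u, v, w ∣ u² w = v w v, w = v⁻¹ u w⁻¹ u v⟩`. -/
def Gamma61 := PresentedGroup ({rel61a, rel61b} : Set (FreeGroup (Fin 3)))

instance : Group Gamma61 := by unfold Gamma61; infer_instance

/-!
In additive notation the relators of `Γ₆¹` become `2u - 2v` and `2u - 2w`, so its
abelianization is `ℤ³ / ⟨2(v - u), 2(w - u)⟩`, which is `ℤ × ℤ/2 × ℤ/2` in the basis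
`u, v - u, w - u`. Concretely, `u, v, w ↦ (1,0,0), (1,1,0), (1,0,1)` and
`(n, a, b) ↦ n u + a (v - u) + b (w - u)` are mutually inverse homomorphisms.
-/

open Multiplicative

section ZModPow

variable {G : Type*} [CommGroup G] {n : ℕ}

def zmodPowHom (g : G) (hg : g ^ n = 1) : Multiplicative (ZMod n) →* G :=
  AddMonoidHom.toMultiplicativeLeft <|
    ZMod.lift n ⟨zmultiplesHom _ (Additive.ofMul g), by simpa using congrArg Additive.ofMul hg⟩

@[simp]
lemma zmodPowHom_ofAdd_intCast (g : G) (hg : g ^ n = 1) (k : ℤ) :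
    zmodPowHom g hg (ofAdd (k : ZMod n)) = g ^ k := by
  simp [zmodPowHom, ZMod.lift_coe]

@[simp]
lemma zmodPowHom_ofAdd_one (g : G) (hg : g ^ n = 1) : zmodPowHom g hg (ofAdd 1) = g := by
  simpa using zmodPowHom_ofAdd_intCast g hg 1

end ZModPow

lemma PresentedGroup.lift_comp_of_eq_one {α G : Type*} [Group G] {rels : Set (FreeGroup α)}
    (f : PresentedGroup rels →* G) {r : FreeGroup α} (hr : r ∈ rels) :
    FreeGroup.lift (f ∘ PresentedGroup.of) r = 1 := by
  have hcomp : FreeGroup.lift (f ∘ PresentedGroup.of) = f.comp (PresentedGroup.mk rels) :=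
    FreeGroup.ext_hom _ _ fun _ => FreeGroup.lift_apply_of
  rw [hcomp, MonoidHom.comp_apply, PresentedGroup.one_of_mem hr, map_one]

namespace Gamma61

abbrev Target := Multiplicative ℤ × Multiplicative (ZMod 2) × Multiplicative (ZMod 2)

def abGen (i : Fin 3) : Abelianization Gamma61 := Abelianization.of (PresentedGroup.of i)

lemma lift_abGen_eq_one {r : FreeGroup (Fin 3)} (hr : r ∈ ({rel61a, rel61b} : Set _)) :
    FreeGroup.lift abGen r = 1 :=
  PresentedGroup.lift_comp_of_eq_one (Abelianization.of (G := Gamma61)) hr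

lemma abGen_one_div_abGen_zero_sq : (abGen 1 / abGen 0) ^ 2 = 1 := by
  have hrel : abGen 0 ^ 2 * abGen 2 * (abGen 1)⁻¹ * (abGen 2)⁻¹ * (abGen 1)⁻¹ = 1 := by
    simpa [rel61a] using lift_abGen_eq_one (Or.inl rfl)
  rw [← inv_inj, inv_one, ← hrel]
  apply Additive.ofMul.injective
  simp only [ofMul_inv, ofMul_pow, ofMul_div, ofMul_mul]
  abel

lemma abGen_two_div_abGen_zero_sq : (abGen 2 / abGen 0) ^ 2 = 1 := by
  have hrel : (abGen 1)⁻¹ * abGen 0 * (abGen 2)⁻¹ * abGen 0 * abGen 1 * (abGen 2)⁻¹ = 1 := by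
    simpa [rel61b] using lift_abGen_eq_one (Or.inr rfl)
  rw [← inv_inj, inv_one, ← hrel]
  apply Additive.ofMul.injective
  simp only [ofMul_inv, ofMul_pow, ofMul_div, ofMul_mul]
  abel

def targetGen : Fin 3 → Target
  | 0 => (ofAdd 1, 1, 1)
  | 1 => (ofAdd 1, ofAdd 1, 1)
  | 2 => (ofAdd 1, 1, ofAdd 1)

lemma lift_targetGen_eq_one : ∀ r ∈ ({rel61a, rel61b} : Set (FreeGroup (Fin 3))),
    FreeGroup.lift targetGen r = 1 := by
  rintro r (rfl | rfl) <;> decide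

def toTarget : Abelianization Gamma61 →* Target :=
  Abelianization.lift (PresentedGroup.toGroup lift_targetGen_eq_one)

def ofTarget : Target →* Abelianization Gamma61 :=
  (zpowersHom _ (abGen 0)).coprod <|
    (zmodPowHom _ abGen_one_div_abGen_zero_sq).coprod (zmodPowHom _ abGen_two_div_abGen_zero_sq)

lemma toTarget_abGen (i : Fin 3) : toTarget (abGen i) = targetGen i :=
  PresentedGroup.toGroup.of lift_targetGen_eq_one

lemma ofTarget_comp_toTarget : ofTarget.comp toTarget = MonoidHom.id _ := by
  refine Abelianization.hom_ext _ _ (PresentedGroup.ext fun i => ?_)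
  change ofTarget (toTarget (abGen i)) = abGen i
  fin_cases i <;> simp [toTarget_abGen, targetGen, ofTarget]

lemma toTarget_ofTarget (i j k : ℤ) :
    toTarget (ofTarget (ofAdd i, ofAdd (j : ZMod 2), ofAdd (k : ZMod 2))) =
      (ofAdd i, ofAdd (j : ZMod 2), ofAdd (k : ZMod 2)) := by
  simp [ofTarget, toTarget_abGen, targetGen, ← ofAdd_zsmul]

lemma toTarget_comp_ofTarget : toTarget.comp ofTarget = MonoidHom.id _ := by
  refine MonoidHom.ext fun ⟨a, b, c⟩ => ?_
  obtain ⟨i, rfl⟩ := ofAdd.surjective a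
  obtain ⟨j, rfl⟩ := (ofAdd.surjective.comp ZMod.intCast_surjective) b
  obtain ⟨k, rfl⟩ := (ofAdd.surjective.comp ZMod.intCast_surjective) c
  exact toTarget_ofTarget i j k

end Gamma61

/-- The abelianization of `Γ₆¹` is isomorphic to `ℤ × ℤ/2ℤ × ℤ/2ℤ`
(written multiplicatively). -/
theorem abelianization_Gamma61 :
    Nonempty (Abelianization Gamma61 ≃*
      Multiplicative ℤ × Multiplicative (ZMod 2) × Multiplicative (ZMod 2)) :=
  ⟨Gamma61.toTarget.toMulEquiv Gamma61.ofTarget Gamma61.ofTarget_comp_toTarget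
    Gamma61.toTarget_comp_ofTarget⟩
end

section
/- The groups Γ₆⁰ = ⟨u, v | v u² v⁻¹ u v⁻¹ u⁻¹ v = u v² u⁻¹⟩ and Γ₆¹ = ⟨u, v, w | u² w = v w v, w = v⁻¹ u w⁻¹ u v⟩ are not isomorphic. -/
/-- The relator `v u² v⁻¹ u v⁻¹ u⁻¹ v u v⁻² u⁻¹` (i.e. the relation
`v u² v⁻¹ u v⁻¹ u⁻¹ v = u v² u⁻¹`) in the free group on generators `u = of 0`, `v = of 1`. -/
def rel60 : FreeGroup (Fin 2) :=
  (FreeGroup.of 1) * (FreeGroup.of 0) ^ 2 * (FreeGroup.of 1)⁻¹ * (FreeGroup.of 0) *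
    (FreeGroup.of 1)⁻¹ * (FreeGroup.of 0)⁻¹ * (FreeGroup.of 1) * (FreeGroup.of 0) *
    ((FreeGroup.of 1)⁻¹) ^ 2 * (FreeGroup.of 0)⁻¹

/-- The one-relator group `Γ₆⁰ = ⟨u, v ∣ v u² v⁻¹ u v⁻¹ u⁻¹ v = u v² u⁻¹⟩`. -/
def Gamma60 := PresentedGroup ({rel60} : Set (FreeGroup (Fin 2)))

instance : Group Gamma60 := by unfold Gamma60; infer_instance

/-!
Every generator occurs with even exponent sum in each relator of both presentations, so every
assignment of the generators in `ℤ/2` defines a homomorphism. Hence `Γ₆⁰` has `2²` homomorphisms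
to `ℤ/2` and `Γ₆¹` has `2³`, while this number is an isomorphism invariant.
-/

namespace PresentedGroup

variable {α G : Type*} [Group G] {rels : Set (FreeGroup α)}

def homEquivOfLiftEqOne (h : ∀ f : α → G, ∀ r ∈ rels, FreeGroup.lift f r = 1) :
    (PresentedGroup rels →* G) ≃ (α → G) where
  toFun φ i := φ (of i)
  invFun f := toGroup (h f)
  left_inv _ := ext fun _ => toGroup.of _
  right_inv _ := funext fun _ => toGroup.of _

theorem card_hom_of_lift_eq_one [Finite α]
    (h : ∀ f : α → G, ∀ r ∈ rels, FreeGroup.lift f r = 1) :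
    Nat.card (PresentedGroup rels →* G) = Nat.card G ^ Nat.card α := by
  rw [Nat.card_congr (homEquivOfLiftEqOne h), Nat.card_fun]

end PresentedGroup

theorem card_hom_Gamma60 : Nat.card (Gamma60 →* Multiplicative (ZMod 2)) = 4 := by
  have key : ∀ a b : Multiplicative (ZMod 2),
      b * a ^ 2 * b⁻¹ * a * b⁻¹ * a⁻¹ * b * a * b⁻¹ ^ 2 * a⁻¹ = 1 := by decide
  refine (PresentedGroup.card_hom_of_lift_eq_one fun f r hr => ?_).trans (by simp)
  rw [Set.mem_singleton_iff.mp hr]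
  simpa only [rel60, map_mul, map_pow, map_inv, FreeGroup.lift_apply_of] using key _ _

theorem card_hom_Gamma61 : Nat.card (Gamma61 →* Multiplicative (ZMod 2)) = 8 := by
  have key_a : ∀ a b c : Multiplicative (ZMod 2), a ^ 2 * c * b⁻¹ * c⁻¹ * b⁻¹ = 1 := by decide
  have key_b : ∀ a b c : Multiplicative (ZMod 2), b⁻¹ * a * c⁻¹ * a * b * c⁻¹ = 1 := by decide
  refine (PresentedGroup.card_hom_of_lift_eq_one fun f r hr => ?_).trans (by simp)
  rcases hr with rfl | rfl
  · simpa only [rel61a, map_mul, map_pow, map_inv, FreeGroup.lift_apply_of] using key_a _ _ _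
  · simpa only [rel61b, map_mul, map_pow, map_inv, FreeGroup.lift_apply_of] using key_b _ _ _

/-- The groups `Γ₆⁰` and `Γ₆¹` are not isomorphic. -/
theorem Gamma60_not_iso_Gamma61 : IsEmpty (Gamma60 ≃* Gamma61) :=
  ⟨fun e => by
    have := Nat.card_congr (e.monoidHomCongrLeftEquiv (N := Multiplicative (ZMod 2)))
    rw [card_hom_Gamma60, card_hom_Gamma61] at this
    omega⟩
end

section
/- The group Γ = ⟨x, y, z, t | x y z = 1, x z y = 1, x t⁻¹ y t⁻¹ z t⁻¹ = 1⟩ contains a subgroup isomorphic to ℤ × ℤ. -/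
/-!
The relators `x y z` and `x z y` give `y z = x⁻¹ = z y`, so `y` and `z` generate an abelian
quotient of `ℤ × ℤ`. It is all of `ℤ × ℤ`: sending `x ↦ (-1, -1)`, `y ↦ (1, 0)`, `z ↦ (0, 1)`,
`t ↦ (0, 0)` kills every relator, and this homomorphism to `ℤ × ℤ` is inverse to `(m, n) ↦ y^m z^n`.
-/

/-- The relators `x y z`, `x z y`, `x t⁻¹ y t⁻¹ z t⁻¹` in the free group on generators
`x = of 0`, `y = of 1`, `z = of 2`, `t = of 3`. -/
def relsHaagerup : Set (FreeGroup (Fin 4)) :=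
  { (FreeGroup.of 0) * (FreeGroup.of 1) * (FreeGroup.of 2),
    (FreeGroup.of 0) * (FreeGroup.of 2) * (FreeGroup.of 1),
    (FreeGroup.of 0) * (FreeGroup.of 3)⁻¹ * (FreeGroup.of 1) * (FreeGroup.of 3)⁻¹ *
      (FreeGroup.of 2) * (FreeGroup.of 3)⁻¹ }

/-- The group `Γ = ⟨x, y, z, t ∣ x y z, x z y, x t⁻¹ y t⁻¹ z t⁻¹⟩`. -/
def GammaH := PresentedGroup relsHaagerup

instance : Group GammaH := by unfold GammaH; infer_instance

namespace Commute

variable {G : Type*} [Group G] {a b : G}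

def zpowersProdHom (h : Commute a b) : Multiplicative ℤ × Multiplicative ℤ →* G :=
  MonoidHom.noncommCoprod (zpowersHom G a) (zpowersHom G b)
    fun m n => (h.zpow_left m.toAdd).zpow_right n.toAdd

theorem zpowersProdHom_apply (h : Commute a b) (p : Multiplicative ℤ × Multiplicative ℤ) :
    h.zpowersProdHom p = a ^ p.1.toAdd * b ^ p.2.toAdd :=
  rfl

theorem zpowersProdHom_injective (h : Commute a b) (φ : G →* Multiplicative (ℤ × ℤ))
    (ha : φ a = .ofAdd (1, 0)) (hb : φ b = .ofAdd (0, 1)) :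
    Function.Injective h.zpowersProdHom := by
  have hcomp : φ.comp h.zpowersProdHom = (MulEquiv.prodMultiplicative ℤ ℤ).symm.toMonoidHom := by
    ext p <;> simp [zpowersProdHom_apply, ha, hb, MulEquiv.prodMultiplicative]
  refine Function.Injective.of_comp (f := φ) ?_
  rw [← MonoidHom.coe_comp, hcomp]
  exact MulEquiv.injective _

end Commute

namespace GammaH

theorem commute_y_z : Commute (PresentedGroup.of 1 : GammaH) (PresentedGroup.of 2) := by
  have hxyz : (PresentedGroup.of 0 : GammaH) * .of 1 * .of 2 = 1 :=
    PresentedGroup.one_of_mem (by simp [relsHaagerup])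
  have hxzy : (PresentedGroup.of 0 : GammaH) * .of 2 * .of 1 = 1 :=
    PresentedGroup.one_of_mem (by simp [relsHaagerup])
  rw [mul_assoc] at hxyz hxzy
  exact mul_left_cancel (hxyz.trans hxzy.symm)

def toIntProd : GammaH →* Multiplicative (ℤ × ℤ) :=
  PresentedGroup.toGroup (f := ![.ofAdd (-1, -1), .ofAdd (1, 0), .ofAdd (0, 1), 1]) <| by
    simp only [relsHaagerup, Set.mem_insert_iff, Set.mem_singleton_iff]
    rintro r (rfl | rfl | rfl) <;> decide

end GammaH

/-- `Γ` contains a subgroup isomorphic to `ℤ × ℤ` (written multiplicatively). -/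
theorem GammaH_contains_Z2 :
    ∃ K : Subgroup GammaH, Nonempty (K ≃* Multiplicative ℤ × Multiplicative ℤ) := by
  have hinj := GammaH.commute_y_z.zpowersProdHom_injective GammaH.toIntProd
    (PresentedGroup.toGroup.of _) (PresentedGroup.toGroup.of _)
  exact ⟨_, ⟨(MonoidHom.ofInjective hinj).symm⟩⟩
end
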